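/- In the two-player PRP publishers game with λ > 1/2 (d(x,y)=|x−y|, x_0^1 = x_0^2 = 0, x* = 1), no profile with x_1 = x_2 is a pure Nash equilibrium: if x_1 = x_2 = 1 then deviating to 0 strictly improves utility (0 > 1/2 − λ), and if x_1 = x_2 = 1 − ε for ε > 0 then deviating to 1 − ε + δ for sufficiently small δ > 0 strictly improves utility. -/

import Mathlib

noncomputable section

def prp (xi xj : ℝ) : ℝ :=
  if |xi - 1| < |xj - 1| then 1 else if |xi - 1| = |xj - 1| then 1 / 2 else 0

def uPRP (lam xi xj : ℝ) : ℝ := prp xi xj - lam * xi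

/-!
On the diagonal each player wins with probability `1/2`. At `x₁ = x₂ = 1` this costs `λ > 1/2`,
so dropping to `0` (winning nothing, paying nothing) is better. At `x₁ = x₂ = x < 1`, moving
slightly closer to `1`, by `δ` with `λ δ < 1/2`, doubles the winning probability to `1` at an
extra cost of only `λ δ`.
-/

open Filter Topology

theorem prp_self (x : ℝ) : prp x x = 1 / 2 := by
  simp [prp]

theorem prp_of_abs_lt {x y : ℝ} (h : |x - 1| < |y - 1|) : prp x y = 1 :=
  if_pos h

theorem prp_of_abs_gt {x y : ℝ} (h : |y - 1| < |x - 1|) : prp x y = 0 := by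
  simp [prp, h.not_gt, h.ne']

theorem uPRP_self (lam x : ℝ) : uPRP lam x x = 1 / 2 - lam * x := by
  rw [uPRP, prp_self]

theorem uPRP_self_lt_uPRP_add {lam x δ : ℝ} (hδ : 0 < δ) (hδx : δ < 2 * (1 - x))
    (hcost : lam * δ < 1 / 2) : uPRP lam x x < uPRP lam (x + δ) x := by
  have hcloser : |x + δ - 1| < |x - 1| := by
    rw [abs_of_neg (by linarith : x - 1 < 0)]
    exact abs_lt.mpr ⟨by linarith, by linarith⟩
  rw [uPRP_self, uPRP, prp_of_abs_lt hcloser]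
  linarith

theorem eventually_uPRP_self_lt_uPRP_add (lam : ℝ) {x : ℝ} (hx : x < 1) :
    ∀ᶠ δ in 𝓝[>] 0, uPRP lam x x < uPRP lam (x + δ) x := by
  have hsmall : ∀ᶠ δ in 𝓝 (0 : ℝ), δ < 2 * (1 - x) := eventually_lt_nhds (by linarith)
  have hcheap : ∀ᶠ δ in 𝓝 (0 : ℝ), lam * δ < 1 / 2 :=
    ((continuous_const_mul lam).tendsto 0).eventually (eventually_lt_nhds (by simp))
  filter_upwards [self_mem_nhdsWithin, nhdsWithin_le_nhds hsmall, nhdsWithin_le_nhds hcheap]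
    with δ hδ hδx hcost using uPRP_self_lt_uPRP_add hδ hδx hcost

/-- In the two-player PRP game with λ > 1/2, no diagonal profile x₁ = x₂ is a
pure Nash equilibrium: at x₁ = x₂ = 1 deviating to 0 strictly improves
(0 > 1/2 − λ), and at x₁ = x₂ = 1 − ε (ε > 0) deviating to 1 − ε + δ strictly
improves for sufficiently small δ > 0. -/
theorem prp_no_diagonal_nash (lam : ℝ) (hlam : 1 / 2 < lam) :
    (uPRP lam 1 1 < uPRP lam 0 1 ∧ uPRP lam 1 1 = 1 / 2 - lam ∧
      uPRP lam 0 1 = 0) ∧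
    (∀ ε : ℝ, 0 < ε → ε ≤ 1 →
      ∃ δ > 0, 1 - ε + δ ∈ Set.Icc (0 : ℝ) 1 ∧
        uPRP lam (1 - ε) (1 - ε) < uPRP lam (1 - ε + δ) (1 - ε)) := by
  have hdiag : uPRP lam 1 1 = 1 / 2 - lam := by rw [uPRP_self, mul_one]
  have hdrop : uPRP lam 0 1 = 0 := by
    rw [uPRP, prp_of_abs_gt (by norm_num), mul_zero, sub_zero]
  refine ⟨⟨by linarith, hdiag, hdrop⟩, fun ε hε hε1 => ?_⟩
  have hshort : ∀ᶠ δ in 𝓝[>] (0 : ℝ), δ ≤ ε :=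
    (eventually_le_nhds hε).filter_mono nhdsWithin_le_nhds
  obtain ⟨δ, (hδ : 0 < δ), hδε, hgain⟩ := (eventually_mem_nhdsWithin.and <| hshort.and <|
    eventually_uPRP_self_lt_uPRP_add lam (by linarith : 1 - ε < 1)).exists
  exact ⟨δ, hδ, ⟨by linarith, by linarith⟩, hgain⟩
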